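/- Let H be a non-zero k-local Hermitian operator on (ℂ²)^{⊗n} with rank r. Then r ≥ 2^{n − (2 log₂ e)·k} (equivalently, r ≥ 2^n · e^{−2k}). -/

import Mathlib

noncomputable section

open Matrix

/-- The single-qubit Pauli matrices `σ_0 = I, σ_1 = X, σ_2 = Y, σ_3 = Z`. -/
def pauli : Fin 4 → Matrix (Fin 2) (Fin 2) ℂ
  | 0 => 1
  | 1 => !![0, 1; 1, 0]
  | 2 => !![0, -Complex.I; Complex.I, 0]
  | 3 => !![1, 0; 0, -1]

/-- The `n`-qubit Pauli operator `σ_s = σ_{s_1} ⊗ ⋯ ⊗ σ_{s_n}`, as a matrix on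
`(ℂ²)^{⊗n}` (indexed by functions `Fin n → Fin 2`). -/
def pauliTensor {n : ℕ} (s : Fin n → Fin 4) :
    Matrix (Fin n → Fin 2) (Fin n → Fin 2) ℂ :=
  Matrix.of fun a b => ∏ i, pauli (s i) (a i) (b i)

/-- The Pauli (Fourier) coefficient `M̂(s) = 2^{-n} tr(σ_s M)`. -/
def pauliCoeff {n : ℕ} (M : Matrix (Fin n → Fin 2) (Fin n → Fin 2) ℂ)
    (s : Fin n → Fin 4) : ℂ :=
  (2 ^ n : ℂ)⁻¹ * (pauliTensor s * M).trace

/-- The weight `|s|` of a Pauli string: the number of nonzero entries. -/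
def pauliWeight {n : ℕ} (s : Fin n → Fin 4) : ℕ :=
  (Finset.univ.filter fun i => s i ≠ 0).card

/-- An operator on `n` qubits is `k`-local if all its Pauli coefficients on strings of
weight greater than `k` vanish. -/
def IsKLocal {n : ℕ} (k : ℕ) (M : Matrix (Fin n → Fin 2) (Fin n → Fin 2) ℂ) : Prop :=
  ∀ s : Fin n → Fin 4, k < pauliWeight s → pauliCoeff M s = 0

/-- The normalised Schatten `p`-norm `‖M‖_p = ((dim)⁻¹ tr|M|^p)^{1/p}`, where the
singular values of `M` are the square roots of the eigenvalues of `MᴴM`. -/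
def schattenNorm {ι : Type*} [Fintype ι] [DecidableEq ι] (p : ℝ)
    (M : Matrix ι ι ℂ) : ℝ :=
  ((Fintype.card ι : ℝ)⁻¹ *
    ∑ i, Real.sqrt ((isHermitian_conjTranspose_mul_self M).eigenvalues i) ^ p) ^ (1 / p)

/-!
Split off the first qubit: `H = ∑ j, σ_j ⊗ H_j`, where the Pauli coefficients of `H_j` are those
of `H` on the strings starting with `j`. If `H_1 = H_2 = H_3 = 0`, then `H = 1 ⊗ H_0` has twice
the rank of the non-zero `k`-local operator `H_0`. Otherwise some `H_j` with `j ≠ 0` is a non-zero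
`(k - 1)`-local operator, and its rank is at most `2 rank H` because it is a combination of two
`n`-qubit blocks of `H`. Induction on `n` gives `2^n ≤ 4^k rank H`, which is stronger than the
claimed bound since `4 ≤ e^2`.
-/

theorem Submodule.finrank_prod {R M M' : Type*} [DivisionRing R] [AddCommGroup M] [Module R M]
    [AddCommGroup M'] [Module R M'] (p : Submodule R M) (q : Submodule R M')
    [FiniteDimensional R p] [FiniteDimensional R q] :
    Module.finrank R (p.prod q) = Module.finrank R p + Module.finrank R q := by
  have hinj : Function.Injective (p.subtype.prodMap q.subtype) :=
    Prod.map_injective.2 ⟨p.injective_subtype, q.injective_subtype⟩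
  rw [← Module.finrank_prod, ← LinearMap.finrank_range_of_inj hinj, LinearMap.range_prodMap,
    Submodule.range_subtype, Submodule.range_subtype]

namespace Matrix

variable {m n m' n' K : Type*} [Fintype n] [Fintype n'] [Field K]

theorem rank_add_le (A B : Matrix m n K) : (A + B).rank ≤ A.rank + B.rank := by
  rw [rank, mulVecLin_add]
  exact (Submodule.finrank_mono (LinearMap.range_add_le _ _)).trans
    (Submodule.finrank_add_le_finrank_add_finrank _ _)

theorem rank_smul_le (c : K) (A : Matrix m n K) : (c • A).rank ≤ A.rank := by
  have : (c • A).mulVecLin = c • A.mulVecLin := map_smul _ _ _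
  rw [rank, this]
  exact Submodule.finrank_mono (LinearMap.range_smul_le_range _ _)

theorem rank_pos_iff [DecidableEq n] {A : Matrix m n K} : 0 < A.rank ↔ A ≠ 0 := by
  rw [Nat.pos_iff_ne_zero, rank, Ne, Submodule.finrank_eq_zero, LinearMap.range_eq_bot,
    not_iff_not]
  refine ⟨fun h => ?_, fun h => h ▸ mulVecLin_zero⟩
  ext i j
  simpa using congrFun (LinearMap.congr_fun h (Pi.single j 1)) i

theorem rank_fromBlocks_zero_zero (A : Matrix m n K) (D : Matrix m' n' K) :
    (fromBlocks A 0 0 D).rank = A.rank + D.rank := by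
  have : (fromBlocks A 0 0 D).mulVecLin =
      (LinearEquiv.sumArrowLequivProdArrow m m' K K).symm.toLinearMap ∘ₗ
        A.mulVecLin.prodMap D.mulVecLin ∘ₗ
          (LinearEquiv.sumArrowLequivProdArrow n n' K K).toLinearMap := by
    ext v (i | i) <;> simp [fromBlocks_mulVec] <;> rfl
  rw [rank, this, LinearMap.range_comp,
    LinearMap.range_comp_of_range_eq_top _ (LinearEquiv.range _), LinearEquiv.finrank_map_eq,
    LinearMap.range_prodMap, Submodule.finrank_prod]
  rfl

end Matrix

section Pauli

lemma sum_pauli_mul_pauli (a b c d : Fin 2) :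
    ∑ j, pauli j a b * pauli j c d = if a = d ∧ b = c then 2 else 0 := by
  fin_cases a <;> fin_cases b <;> fin_cases c <;> fin_cases d <;>
    simp [Fin.sum_univ_four, pauli, Complex.I_mul_I] <;> ring_nf

variable {n : ℕ}

lemma sum_pauliTensor_mul_pauliTensor (a b c d : Fin n → Fin 2) :
    ∑ s, pauliTensor s a b * pauliTensor s c d = if a = d ∧ b = c then 2 ^ n else 0 := by
  simp only [pauliTensor, of_apply, ← Finset.prod_mul_distrib]
  rw [← Fintype.prod_sum fun i j => pauli j (a i) (b i) * pauli j (c i) (d i)]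
  simp only [sum_pauli_mul_pauli, Finset.prod_ite_zero, funext_iff, Finset.prod_const,
    Finset.card_univ, Fintype.card_fin, Finset.mem_univ, true_implies, forall_and]

lemma sum_pauliCoeff_smul_pauliTensor (M : Matrix (Fin n → Fin 2) (Fin n → Fin 2) ℂ) :
    ∑ s, pauliCoeff M s • pauliTensor s = M := by
  ext a b
  have hcd : ∀ c d, ∑ s, pauliTensor s c d * M d c * pauliTensor s a b
      = if c = b ∧ d = a then 2 ^ n * M a b else 0 := by
    intro c d
    simp_rw [mul_right_comm _ (M d c), ← Finset.sum_mul, sum_pauliTensor_mul_pauliTensor]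
    aesop
  calc (∑ s, pauliCoeff M s • pauliTensor s) a b
      = (2 ^ n)⁻¹ * ∑ c, ∑ d, ∑ s, pauliTensor s c d * M d c * pauliTensor s a b := by
        simp only [Matrix.sum_apply, Matrix.smul_apply, smul_eq_mul, pauliCoeff, trace, diag,
          mul_apply, Finset.mul_sum, Finset.sum_mul]
        rw [Finset.sum_comm]
        refine Finset.sum_congr rfl fun c _ => ?_
        rw [Finset.sum_comm]
        exact Finset.sum_congr rfl fun d _ => Finset.sum_congr rfl fun s _ => by ring
    _ = M a b := by simp [hcd, ite_and]

lemma eq_zero_of_pauliCoeff_eq_zero {M : Matrix (Fin n → Fin 2) (Fin n → Fin 2) ℂ}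
    (h : ∀ s, pauliCoeff M s = 0) : M = 0 := by
  rw [← sum_pauliCoeff_smul_pauliTensor M]
  simp [h]

lemma sum_univ_fin_succ_pi {α M : Type*} [Fintype α] [AddCommMonoid M]
    (g : (Fin (n + 1) → α) → M) : ∑ u, g u = ∑ a, ∑ x, g (Fin.cons a x) := by
  rw [← (Fin.consEquiv fun _ => α).sum_comp g, Fintype.sum_prod_type]
  rfl

lemma pauliTensor_cons (j : Fin 4) (s : Fin n → Fin 4) (a b : Fin 2) (x y : Fin n → Fin 2) :
    pauliTensor (Fin.cons j s) (Fin.cons a x) (Fin.cons b y) =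
      pauli j a b * pauliTensor s x y := by
  simp [pauliTensor, Fin.prod_univ_succ]

lemma pauliWeight_cons (j : Fin 4) (s : Fin n → Fin 4) :
    pauliWeight (Fin.cons j s) = (if j = 0 then 0 else 1) + pauliWeight s := by
  simp only [pauliWeight, Finset.card_filter, Fin.sum_univ_succ, Fin.cons_zero, Fin.cons_succ]
  split_ifs <;> simp_all

end Pauli

section FirstQubit

variable {n : ℕ}

def qubitBlock (H : Matrix (Fin (n + 1) → Fin 2) (Fin (n + 1) → Fin 2) ℂ) (a b : Fin 2) :
    Matrix (Fin n → Fin 2) (Fin n → Fin 2) ℂ :=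
  H.submatrix (Fin.cons a ·) (Fin.cons b ·)

/-- `H = ∑ j, σ_j ⊗ firstQubitComponent H j`; this is `½ tr₁((σ_j ⊗ 1) H)`. -/
def firstQubitComponent (H : Matrix (Fin (n + 1) → Fin 2) (Fin (n + 1) → Fin 2) ℂ)
    (j : Fin 4) : Matrix (Fin n → Fin 2) (Fin n → Fin 2) ℂ :=
  (2 : ℂ)⁻¹ • ∑ a, ∑ b, pauli j a b • qubitBlock H b a

variable (H : Matrix (Fin (n + 1) → Fin 2) (Fin (n + 1) → Fin 2) ℂ)

lemma qubitBlock_eq_sum (a b : Fin 2) :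
    qubitBlock H a b = ∑ j, pauli j a b • firstQubitComponent H j := by
  calc qubitBlock H a b
      = ∑ c : Fin 2, ∑ d : Fin 2,
          ((2 : ℂ)⁻¹ * ∑ j, pauli j a b * pauli j c d) • qubitBlock H d c := by
        simp [sum_pauli_mul_pauli, ite_and]
    _ = ∑ j, pauli j a b • firstQubitComponent H j := by
        simp only [firstQubitComponent, Finset.mul_sum, Finset.sum_smul, Finset.smul_sum,
          smul_smul]
        simp_rw [Finset.sum_comm (s := (Finset.univ : Finset (Fin 4))), mul_left_comm]

lemma trace_pauliTensor_cons_mul (j : Fin 4) (s : Fin n → Fin 4) :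
    (pauliTensor (Fin.cons j s) * H).trace
      = ∑ a, ∑ b, pauli j a b * (pauliTensor s * qubitBlock H b a).trace := by
  simp only [trace, diag, mul_apply, sum_univ_fin_succ_pi, pauliTensor_cons, qubitBlock,
    submatrix_apply, Finset.mul_sum]
  refine Finset.sum_congr rfl fun a _ => ?_
  rw [Finset.sum_comm]
  exact Finset.sum_congr rfl fun b _ => Finset.sum_congr rfl fun x _ =>
    Finset.sum_congr rfl fun y _ => mul_assoc _ _ _

lemma pauliCoeff_firstQubitComponent (j : Fin 4) (s : Fin n → Fin 4) :
    pauliCoeff (firstQubitComponent H j) s = pauliCoeff H (Fin.cons j s) := by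
  simp only [pauliCoeff, firstQubitComponent, trace_pauliTensor_cons_mul, Matrix.mul_smul,
    Matrix.mul_sum, trace_smul, trace_sum, smul_eq_mul, pow_succ, mul_inv, mul_assoc]

lemma rank_firstQubitComponent_le (j : Fin 4) :
    (firstQubitComponent H j).rank ≤ 2 * H.rank := by
  -- each Pauli matrix has exactly two non-zero entries
  obtain ⟨a, b, a', b', c, c', hj⟩ : ∃ (a b a' b' : Fin 2) (c c' : ℂ),
      firstQubitComponent H j = c • qubitBlock H a b + c' • qubitBlock H a' b' := by
    fin_cases j
    exacts [⟨0, 0, 1, 1, 2⁻¹, 2⁻¹, by simp [firstQubitComponent, pauli, Fin.sum_univ_two]⟩,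
      ⟨1, 0, 0, 1, 2⁻¹, 2⁻¹, by simp [firstQubitComponent, pauli, Fin.sum_univ_two]⟩,
      ⟨1, 0, 0, 1, -2⁻¹ * Complex.I, 2⁻¹ * Complex.I, by
        simp [firstQubitComponent, pauli, Fin.sum_univ_two, smul_smul]⟩,
      ⟨0, 0, 1, 1, 2⁻¹, -2⁻¹, by simp [firstQubitComponent, pauli, Fin.sum_univ_two]⟩]
  calc (firstQubitComponent H j).rank
      ≤ (qubitBlock H a b).rank + (qubitBlock H a' b').rank := by
        rw [hj]
        exact (rank_add_le _ _).trans (add_le_add (rank_smul_le _ _) (rank_smul_le _ _))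
    _ ≤ 2 * H.rank := by
        rw [two_mul]
        exact add_le_add (rank_submatrix_le _ _ _) (rank_submatrix_le _ _ _)

lemma rank_eq_two_mul_rank_firstQubitComponent_zero
    (h : ∀ j ≠ 0, firstQubitComponent H j = 0) :
    H.rank = 2 * (firstQubitComponent H 0).rank := by
  have hblk : ∀ a b x y, H (Fin.cons a x) (Fin.cons b y) =
      (1 : Matrix (Fin 2) (Fin 2) ℂ) a b * firstQubitComponent H 0 x y := by
    intro a b x y
    have := congr_fun₂ (qubitBlock_eq_sum H a b) x y
    rw [Fin.sum_univ_succ, Finset.sum_eq_zero fun j _ => by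
      rw [h j.succ (Fin.succ_ne_zero j), smul_zero], add_zero] at this
    exact this
  let e : (Fin n → Fin 2) ⊕ (Fin n → Fin 2) ≃ (Fin (n + 1) → Fin 2) :=
    (Equiv.boolProdEquivSum _).symm.trans
      ((finTwoEquiv.symm.prodCongr (Equiv.refl _)).trans (Fin.consEquiv fun _ => Fin 2))
  have hsplit : H.submatrix e e =
      fromBlocks (firstQubitComponent H 0) 0 0 (firstQubitComponent H 0) := by
    ext (x | x) (y | y) <;> simp [e, finTwoEquiv, Fin.consEquiv, hblk]
  rw [← rank_submatrix H e e, hsplit, rank_fromBlocks_zero_zero, two_mul]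

variable {H}

lemma IsKLocal.firstQubitComponent_zero {k : ℕ} (hH : IsKLocal k H) :
    IsKLocal k (firstQubitComponent H 0) := fun s hs => by
  rw [pauliCoeff_firstQubitComponent]
  exact hH _ (by rwa [pauliWeight_cons, if_pos rfl, zero_add])

lemma IsKLocal.pauliCoeff_firstQubitComponent_eq_zero {k : ℕ} (hH : IsKLocal k H) {j : Fin 4}
    (hj : j ≠ 0) {s : Fin n → Fin 4} (hs : k ≤ pauliWeight s) :
    pauliCoeff (firstQubitComponent H j) s = 0 := by
  rw [pauliCoeff_firstQubitComponent]
  exact hH _ (by rw [pauliWeight_cons, if_neg hj]; omega)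

end FirstQubit

theorem two_pow_le_four_pow_mul_rank {n k : ℕ} {H : Matrix (Fin n → Fin 2) (Fin n → Fin 2) ℂ}
    (hloc : IsKLocal k H) (hne : H ≠ 0) : 2 ^ n ≤ 4 ^ k * H.rank := by
  induction n generalizing k with
  | zero => simpa using Nat.mul_le_mul (Nat.one_le_pow k 4 four_pos) (rank_pos_iff.2 hne)
  | succ n ih =>
    by_cases h : ∀ j ≠ 0, firstQubitComponent H j = 0
    · have hrank := rank_eq_two_mul_rank_firstQubitComponent_zero H h
      have hne0 : firstQubitComponent H 0 ≠ 0 := by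
        rw [← rank_pos_iff]
        have := rank_pos_iff.2 hne
        omega
      have ih0 := ih hloc.firstQubitComponent_zero hne0
      rw [pow_succ, hrank]
      linarith
    · push Not at h
      obtain ⟨j, hj, hne_j⟩ := h
      cases k with
      | zero =>
        exact absurd (eq_zero_of_pauliCoeff_eq_zero fun s =>
          hloc.pauliCoeff_firstQubitComponent_eq_zero hj (Nat.zero_le _)) hne_j
      | succ k =>
        calc 2 ^ (n + 1) = 2 ^ n * 2 := pow_succ 2 n
          _ ≤ 4 ^ k * (firstQubitComponent H j).rank * 2 := by
            gcongr
            exact ih (fun s hs => hloc.pauliCoeff_firstQubitComponent_eq_zero hj hs) hne_j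
          _ ≤ 4 ^ k * (2 * H.rank) * 2 := by gcongr; exact rank_firstQubitComponent_le H j
          _ = 4 ^ (k + 1) * H.rank := by ring

theorem kLocal_rank_lower_bound_general {n k : ℕ}
    (H : Matrix (Fin n → Fin 2) (Fin n → Fin 2) ℂ)
    (hloc : IsKLocal k H) (hne : H ≠ 0) :
    (2 : ℝ) ^ ((n : ℝ) - (2 * Real.logb 2 (Real.exp 1)) * k) ≤ (H.rank : ℝ) := by
  have hlog : 1 ≤ Real.logb 2 (Real.exp 1) :=
    (Real.logb_self_eq_one one_lt_two).ge.trans <|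
      Real.logb_le_logb_of_le one_lt_two two_pos (by linarith [Real.add_one_le_exp 1])
  have hrank : (2 : ℝ) ^ n ≤ 4 ^ k * H.rank := by
    exact_mod_cast two_pow_le_four_pow_mul_rank hloc hne
  calc (2 : ℝ) ^ ((n : ℝ) - (2 * Real.logb 2 (Real.exp 1)) * k)
      ≤ 2 ^ ((n : ℝ) - (2 * k : ℕ)) :=
        Real.rpow_le_rpow_of_exponent_le one_le_two (by push_cast; nlinarith)
    _ = 2 ^ n / 4 ^ k := by
        rw [Real.rpow_sub two_pos, Real.rpow_natCast, Real.rpow_natCast, pow_mul]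
        norm_num
    _ ≤ H.rank := by
        rw [div_le_iff₀ (by positivity)]
        linarith

/-- Quantum Schwartz–Zippel: a non-zero `k`-local Hermitian operator on `n` qubits has
rank at least `2^{n - (2 log₂ e) k}`. -/
theorem kLocal_rank_lower_bound {n k : ℕ}
    (H : Matrix (Fin n → Fin 2) (Fin n → Fin 2) ℂ)
    (hH : H.IsHermitian) (hloc : IsKLocal k H) (hne : H ≠ 0) :
    (2 : ℝ) ^ ((n : ℝ) - (2 * Real.logb 2 (Real.exp 1)) * k) ≤ (H.rank : ℝ) :=
  kLocal_rank_lower_bound_general H hloc hne
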